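/- Suppose a normed space X has a norm satisfying ∥x∥ = max(∥x∥_∞, sup over n ≥ 2 and E_1 < ... < E_n of (1/(2√n)) ∑_{i=1}^n ∥E_i x∥) on finitely supported sequences, and satisfies the upper estimate ∥∑_{i=1}^m u_i∥ ≤ √3 (∑_{i=1}^m ∥u_i∥²)^{1/2} for finite block bases. Then for any normalized block basis (y_i)_{i=1}^n, √n/2 ≤ ∥∑_{i=1}^n y_i∥ ≤ 3√n. -/
import Mathlib

section Aux

variable (N : (ℕ →₀ ℝ) → ℝ)
variable (himp : ∀ x : ℕ →₀ ℝ, N x = max (⨆ i : ℕ, |x i|)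
      (sSup {s : ℝ | ∃ n : ℕ, 2 ≤ n ∧ ∃ E : Fin n → Finset ℕ,
        (∀ i j : Fin n, i < j → ∀ a ∈ E i, ∀ b ∈ E j, a < b) ∧
        s = (1 / (2 * Real.sqrt n)) * ∑ i, N (x.filter (· ∈ E i))}))

include himp

theorem aux_nonneg (x : ℕ →₀ ℝ) : 0 ≤ N x := by
  rw [himp x]
  exact le_trans (Real.iSup_nonneg fun i => abs_nonneg _) (le_max_left _ _)

theorem aux_zero : N 0 = 0 := by
  have h := himp 0
  have hA : (⨆ i : ℕ, |(0 : ℕ →₀ ℝ) i|) = 0 := by simp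
  rw [hA] at h
  set S : Set ℝ := {s : ℝ | ∃ n : ℕ, 2 ≤ n ∧ ∃ E : Fin n → Finset ℕ,
        (∀ i j : Fin n, i < j → ∀ a ∈ E i, ∀ b ∈ E j, a < b) ∧
        s = (1 / (2 * Real.sqrt n)) * ∑ i, N ((0 : ℕ →₀ ℝ).filter (· ∈ E i))} with hSdef
  have hmem : 2 * N 0 ∈ S := by
    refine ⟨16, by norm_num, fun i => {(i : ℕ)}, ?_, ?_⟩
    · intro i j hij a ha b hb
      simp only [Finset.mem_singleton] at ha hb
      subst ha; subst hb
      exact_mod_cast hij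
    · have h16 : Real.sqrt ((16 : ℕ) : ℝ) = 4 := by
        rw [show ((16 : ℕ) : ℝ) = 4 ^ 2 by norm_num, Real.sqrt_sq (by norm_num)]
      simp only [Finsupp.filter_zero, Finset.sum_const, Finset.card_univ, Fintype.card_fin,
        nsmul_eq_mul, h16]
      ring
  have hN0 : 0 ≤ N 0 := aux_nonneg N himp 0
  by_cases hb : BddAbove S
  · have h1 : 2 * N 0 ≤ sSup S := le_csSup hb hmem
    have h2 : sSup S ≤ N 0 := by rw [h]; exact le_max_right _ _
    linarith
  · rw [Real.sSup_of_not_bddAbove hb] at h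
    simpa using h

theorem aux_single (a : ℕ) (c : ℝ) : N (Finsupp.single a c) = |c| := by
  set z := Finsupp.single a c with hz
  have hA : (⨆ i : ℕ, |z i|) = |c| := by
    have hbdd : BddAbove (Set.range fun i : ℕ => |z i|) := by
      refine ⟨|c|, ?_⟩
      rintro _ ⟨i, rfl⟩
      simp only [hz, Finsupp.single_apply]
      split <;> simp
    apply le_antisymm
    · refine ciSup_le fun i => ?_
      simp only [hz, Finsupp.single_apply]
      split <;> simp
    · have := le_ciSup hbdd a
      simpa [hz, Finsupp.single_eq_same] using this
  have h := himp z
  rw [hA] at h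
  have hNz : 0 ≤ N z := aux_nonneg N himp z
  have hS : sSup {s : ℝ | ∃ n : ℕ, 2 ≤ n ∧ ∃ E : Fin n → Finset ℕ,
        (∀ i j : Fin n, i < j → ∀ a ∈ E i, ∀ b ∈ E j, a < b) ∧
        s = (1 / (2 * Real.sqrt n)) * ∑ i, N (z.filter (· ∈ E i))} ≤ N z / 2 := by
    apply Real.sSup_le
    · rintro s ⟨m, hm, E, hE, rfl⟩
      have hterm : ∀ i : Fin m, N (z.filter (· ∈ E i)) = if a ∈ E i then N z else 0 := by
        intro i
        by_cases hai : a ∈ E i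
        · rw [if_pos hai, hz, Finsupp.filter_single_of_pos _ hai]
        · rw [if_neg hai, hz, Finsupp.filter_single_of_neg _ hai, aux_zero N himp]
      rw [Finset.sum_congr rfl fun i _ => hterm i, ← Finset.sum_filter, Finset.sum_const,
        nsmul_eq_mul]
      have hcard : ({i : Fin m | a ∈ E i} : Finset (Fin m)).card ≤ 1 := by
        refine Finset.card_le_one.mpr ?_
        intro i hi j hj
        simp only [Finset.mem_filter] at hi hj
        by_contra hne
        rcases lt_or_gt_of_ne hne with hlt | hlt
        · exact lt_irrefl a (hE i j hlt a hi.2 a hj.2)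
        · exact lt_irrefl a (hE j i hlt a hj.2 a hi.2)
      have hsq : 1 ≤ Real.sqrt (m : ℝ) := Real.one_le_sqrt.mpr (by exact_mod_cast hm.trans' one_le_two)
      have hc1 : 1 / (2 * Real.sqrt (m : ℝ)) ≤ 1 / 2 := by
        apply div_le_div_of_nonneg_left (by norm_num) (by norm_num)
        linarith
      have hc0 : 0 < 1 / (2 * Real.sqrt (m : ℝ)) := by positivity
      have hcardR : (({i : Fin m | a ∈ E i} : Finset (Fin m)).card : ℝ) ≤ 1 := by
        exact_mod_cast hcard
      calc 1 / (2 * Real.sqrt (m : ℝ)) * ((({i : Fin m | a ∈ E i} : Finset (Fin m)).card : ℝ) * N z)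
          ≤ 1 / (2 * Real.sqrt (m : ℝ)) * (1 * N z) := by
            apply mul_le_mul_of_nonneg_left _ hc0.le
            exact mul_le_mul_of_nonneg_right hcardR hNz
        _ = 1 / (2 * Real.sqrt (m : ℝ)) * N z := by ring
        _ ≤ 1 / 2 * N z := mul_le_mul_of_nonneg_right hc1 hNz
        _ = N z / 2 := by ring
    · linarith
  have hge : |c| ≤ N z := by rw [h]; exact le_max_left _ _
  have hle : N z ≤ max |c| (N z / 2) :=
    le_trans (le_of_eq h) (max_le_max le_rfl hS)
  rcases le_max_iff.mp hle with h1 | h1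
  · exact le_antisymm h1 hge
  · have := abs_nonneg c
    linarith

end Aux

section Aux2

variable (N : (ℕ →₀ ℝ) → ℝ)
variable (himp : ∀ x : ℕ →₀ ℝ, N x = max (⨆ i : ℕ, |x i|)
      (sSup {s : ℝ | ∃ n : ℕ, 2 ≤ n ∧ ∃ E : Fin n → Finset ℕ,
        (∀ i j : Fin n, i < j → ∀ a ∈ E i, ∀ b ∈ E j, a < b) ∧
        s = (1 / (2 * Real.sqrt n)) * ∑ i, N (x.filter (· ∈ E i))}))
variable (hupper : ∀ (m : ℕ) (u : Fin m → (ℕ →₀ ℝ)),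
      (∀ i j : Fin m, i < j → ∀ a ∈ (u i).support, ∀ b ∈ (u j).support, a < b) →
      N (∑ i, u i) ≤ Real.sqrt 3 * Real.sqrt (∑ i, (N (u i)) ^ 2))

include himp hupper

theorem aux_l2 (w : ℕ →₀ ℝ) :
    N w ≤ Real.sqrt 3 * ∑ a ∈ w.support, |w a| := by
  classical
  set s := w.support with hs
  set e := s.orderIsoOfFin rfl with he
  set u : Fin s.card → (ℕ →₀ ℝ) := fun i => Finsupp.single ((e i : ℕ)) (w (e i)) with hu
  have hord : ∀ i j : Fin s.card, i < j →
      ∀ a ∈ (u i).support, ∀ b ∈ (u j).support, a < b := by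
    intro i j hij a ha b hb
    have ha' : a = (e i : ℕ) := Finset.mem_singleton.mp (Finsupp.support_single_subset ha)
    have hb' : b = (e j : ℕ) := Finset.mem_singleton.mp (Finsupp.support_single_subset hb)
    subst ha'; subst hb'
    exact Subtype.coe_lt_coe.mpr (e.lt_iff_lt.mpr hij)
  have hsum : ∑ i, u i = w := by
    have h1 : ∑ i, u i = ∑ a : s, Finsupp.single (a : ℕ) (w a) :=
      Fintype.sum_equiv e.toEquiv _ _ fun i => rfl
    have h2' : (∑ a : s, Finsupp.single (a : ℕ) (w a)) = ∑ a ∈ s, Finsupp.single a (w a) :=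
      Finset.sum_coe_sort s (fun a => Finsupp.single a (w a))
    rw [h1, h2']
    exact Finsupp.sum_single w
  have h2 := hupper s.card u hord
  rw [hsum] at h2
  have h3 : (∑ i, (N (u i)) ^ 2) = ∑ i, |w (e i)| ^ 2 := by
    apply Finset.sum_congr rfl
    intro i _
    rw [hu]
    rw [aux_single N himp]
  have h4 : Real.sqrt (∑ i, (N (u i)) ^ 2) ≤ ∑ a ∈ s, |w a| := by
    rw [h3]
    have h5 : (∑ i, |w (e i)| ^ 2) ≤ (∑ i, |w (e i)|) ^ 2 :=
      Finset.sum_sq_le_sq_sum_of_nonneg fun i _ => abs_nonneg _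
    have h6 : Real.sqrt (∑ i, |w (e i)| ^ 2) ≤ Real.sqrt ((∑ i, |w (e i)|) ^ 2) :=
      Real.sqrt_le_sqrt h5
    rw [Real.sqrt_sq (Finset.sum_nonneg fun i _ => abs_nonneg _)] at h6
    have h7 : (∑ i, |w (e i)|) = ∑ a ∈ s, |w a| := by
      rw [show (∑ i, |w (e i)|) = ∑ a : s, |w a| from
        Fintype.sum_equiv e.toEquiv _ _ fun i => rfl]
      exact Finset.sum_coe_sort s (fun a => |w a|)
    rwa [h7] at h6
  exact h2.trans (mul_le_mul_of_nonneg_left h4 (Real.sqrt_nonneg 3))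

theorem aux_bdd (x : ℕ →₀ ℝ) :
    BddAbove {s : ℝ | ∃ n : ℕ, 2 ≤ n ∧ ∃ E : Fin n → Finset ℕ,
        (∀ i j : Fin n, i < j → ∀ a ∈ E i, ∀ b ∈ E j, a < b) ∧
        s = (1 / (2 * Real.sqrt n)) * ∑ i, N (x.filter (· ∈ E i))} := by
  classical
  set L : ℝ := ∑ a ∈ x.support, |x a| with hL
  have hL0 : 0 ≤ L := Finset.sum_nonneg fun a _ => abs_nonneg _
  refine ⟨Real.sqrt 3 * L, ?_⟩
  rintro s ⟨m, hm, E, hE, rfl⟩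
  set F : Fin m → Finset ℕ := fun i => (x.filter (· ∈ E i)).support with hF
  have hFi : ∀ i, F i = {a ∈ x.support | a ∈ E i} := fun i => Finsupp.support_filter _ _
  have key : (∑ i, N (x.filter (· ∈ E i))) ≤ Real.sqrt 3 * L := by
    have h1 : ∀ i : Fin m, N (x.filter (· ∈ E i)) ≤ Real.sqrt 3 * ∑ a ∈ F i, |x a| := by
      intro i
      have := aux_l2 N himp hupper (x.filter (· ∈ E i))
      refine this.trans_eq ?_
      congr 1
      apply Finset.sum_congr rfl
      intro a ha
      rw [Finsupp.support_filter] at ha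
      rw [Finsupp.filter_apply_pos _ _ (Finset.mem_filter.mp ha).2]
    calc (∑ i, N (x.filter (· ∈ E i))) ≤ ∑ i, Real.sqrt 3 * ∑ a ∈ F i, |x a| :=
          Finset.sum_le_sum fun i _ => h1 i
      _ = Real.sqrt 3 * ∑ i, ∑ a ∈ F i, |x a| := by rw [Finset.mul_sum]
      _ ≤ Real.sqrt 3 * L := by
          apply mul_le_mul_of_nonneg_left _ (Real.sqrt_nonneg 3)
          have hdisj : ∀ i ∈ (Finset.univ : Finset (Fin m)), ∀ j ∈ Finset.univ, i ≠ j →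
              Disjoint (F i) (F j) := by
            intro i _ j _ hij
            refine Finset.disjoint_left.mpr fun a hai haj => ?_
            rw [hFi] at hai haj
            have hai' := (Finset.mem_filter.mp hai).2
            have haj' := (Finset.mem_filter.mp haj).2
            rcases lt_or_gt_of_ne hij with hlt | hlt
            · exact lt_irrefl a (hE i j hlt a hai' a haj')
            · exact lt_irrefl a (hE j i hlt a haj' a hai')
          rw [← Finset.sum_biUnion hdisj]
          apply Finset.sum_le_sum_of_subset_of_nonneg
          · intro a ha
            rcases Finset.mem_biUnion.mp ha with ⟨i, _, hai⟩
            rw [hFi] at hai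
            exact (Finset.mem_filter.mp hai).1
          · intro a _ _
            exact abs_nonneg _
  have hsq : 1 ≤ Real.sqrt (m : ℝ) := Real.one_le_sqrt.mpr (by exact_mod_cast hm.trans' one_le_two)
  have hc0 : 0 < 1 / (2 * Real.sqrt (m : ℝ)) := by positivity
  have hc1 : 1 / (2 * Real.sqrt (m : ℝ)) ≤ 1 := by
    rw [div_le_one (by linarith)]; linarith
  calc 1 / (2 * Real.sqrt (m : ℝ)) * ∑ i, N (x.filter (· ∈ E i))
      ≤ 1 / (2 * Real.sqrt (m : ℝ)) * (Real.sqrt 3 * L) :=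
        mul_le_mul_of_nonneg_left key hc0.le
    _ ≤ 1 * (Real.sqrt 3 * L) := mul_le_mul_of_nonneg_right hc1 (by positivity)
    _ = Real.sqrt 3 * L := one_mul _

end Aux2

/-- if a norm `N` on finitely supported sequences satisfies the
Tzafriri `Ti(2;1/2)` implicit equation
`N x = max(‖x‖_∞, sup_{n ≥ 2, E_1 < ... < E_n} (1/(2√n)) ∑ N(E_i x))`
and the upper `ℓ_2` estimate `N(∑ u_i) ≤ √3 (∑ N(u_i)²)^{1/2}` for finite block
bases, then any normalized block basis `(y_i)_{i=1}^n` satisfies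
`√n/2 ≤ N(∑ y_i) ≤ 3√n`. -/
theorem stmt4 (N : (ℕ →₀ ℝ) → ℝ)
    (himp : ∀ x : ℕ →₀ ℝ, N x = max (⨆ i : ℕ, |x i|)
      (sSup {s : ℝ | ∃ n : ℕ, 2 ≤ n ∧ ∃ E : Fin n → Finset ℕ,
        (∀ i j : Fin n, i < j → ∀ a ∈ E i, ∀ b ∈ E j, a < b) ∧
        s = (1 / (2 * Real.sqrt n)) * ∑ i, N (x.filter (· ∈ E i))}))
    (hupper : ∀ (m : ℕ) (u : Fin m → (ℕ →₀ ℝ)),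
      (∀ i j : Fin m, i < j → ∀ a ∈ (u i).support, ∀ b ∈ (u j).support, a < b) →
      N (∑ i, u i) ≤ Real.sqrt 3 * Real.sqrt (∑ i, (N (u i)) ^ 2))
    (n : ℕ) (y : Fin n → (ℕ →₀ ℝ))
    (hy : ∀ i j : Fin n, i < j → ∀ a ∈ (y i).support, ∀ b ∈ (y j).support, a < b)
    (hnorm : ∀ i, N (y i) = 1) :
    Real.sqrt n / 2 ≤ N (∑ i, y i) ∧ N (∑ i, y i) ≤ 3 * Real.sqrt n := by
  classical
  constructor
  · -- lower bound
    rcases Nat.lt_or_ge n 2 with hn | hn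
    · interval_cases n
      · simp [aux_zero N himp]
      · have h1 : (∑ i : Fin 1, y i) = y 0 := by simp
        rw [h1, hnorm 0]
        rw [show ((1 : ℕ) : ℝ) = 1 by norm_num, Real.sqrt_one]
        norm_num
    · set x := ∑ i, y i with hx
      have hfilter : ∀ i : Fin n, x.filter (· ∈ (y i).support) = y i := by
        intro i
        rw [hx, Finsupp.filter_sum]
        rw [Finset.sum_eq_single i]
        · ext a
          rw [Finsupp.filter_apply]
          split
          · rfl
          · next h => exact (Finsupp.notMem_support_iff.mp h).symm
        · intro j _ hji
          ext a
          rw [Finsupp.filter_apply]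
          split
          · next h =>
            by_contra hne
            have haj : a ∈ (y j).support := Finsupp.mem_support_iff.mpr fun h0 => hne (h0 ▸ rfl)
            rcases lt_or_gt_of_ne hji with hlt | hlt
            · exact lt_irrefl a (hy j i hlt a haj a h)
            · exact lt_irrefl a (hy i j hlt a h a haj)
          · rfl
        · intro h
          exact absurd (Finset.mem_univ i) h
      have hmem : Real.sqrt n / 2 ∈ {s : ℝ | ∃ m : ℕ, 2 ≤ m ∧ ∃ E : Fin m → Finset ℕ,
          (∀ i j : Fin m, i < j → ∀ a ∈ E i, ∀ b ∈ E j, a < b) ∧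
          s = (1 / (2 * Real.sqrt m)) * ∑ i, N (x.filter (· ∈ E i))} := by
        refine ⟨n, hn, fun i => (y i).support, hy, ?_⟩
        have hsum : (∑ i : Fin n, N (x.filter (· ∈ (y i).support))) = (n : ℝ) := by
          rw [Finset.sum_congr rfl fun i _ => by rw [hfilter i, hnorm i]]
          simp
        rw [hsum]
        have hms : Real.sqrt (n : ℝ) * Real.sqrt (n : ℝ) = (n : ℝ) :=
          Real.mul_self_sqrt (by positivity)
        have hs0 : 0 < Real.sqrt (n : ℝ) := by
          have : (0 : ℝ) < (n : ℝ) := by exact_mod_cast hn.trans_lt' (by norm_num)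
          exact Real.sqrt_pos.mpr this
        field_simp
        linarith [hms]
      have hbdd := aux_bdd N himp hupper x
      have hle := le_csSup hbdd hmem
      rw [himp x]
      exact hle.trans (le_max_right _ _)
  · -- upper bound
    have h2 := hupper n y hy
    have h3 : (∑ i, (N (y i)) ^ 2) = (n : ℝ) := by simp [hnorm]
    rw [h3] at h2
    have h4 : Real.sqrt 3 ≤ 3 := by
      nlinarith [Real.sq_sqrt (show (0:ℝ) ≤ 3 by norm_num), Real.sqrt_nonneg 3]
    exact h2.trans (mul_le_mul_of_nonneg_right h4 (Real.sqrt_nonneg _))
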